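/- arXiv:2310.11837 — 2 statements merged into one kernel-verified Lean document; each statement's English description precedes it below -/
import Mathlib

section
/- Let Θ ⊆ ℝ^i and Θ̃ ⊆ ℝ^j be open sets with i ≤ j, let g : Θ̃ → Θ be twice differentiable with surjective Jacobian at every point and with g(Θ̃) = Θ, let f : Θ → ℝ be twice continuously differentiable, and set f̃ = f ∘ g. Then f̃ has a local maximum at a point θ̃ ∈ Θ̃ if and only if f has a local maximum at θ = g(θ̃). -/
/-!
Since `g` is differentiable near `θ̃` with derivative continuous at `θ̃`, it is strictly
differentiable there; with a surjective derivative it is then locally open (Lyusternik–Graves),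
so `g` maps the neighbourhood filter of `θ̃` onto that of `g θ̃`. On open sets local maxima only
depend on these filters, and `g` transports one onto the other.
-/

open Set Topology Filter

theorem isLocalMaxOn_iff_isLocalMax_of_mem_nhds {X β : Type*} [TopologicalSpace X] [Preorder β]
    {f : X → β} {s : Set X} {a : X} (hs : s ∈ 𝓝 a) : IsLocalMaxOn f s a ↔ IsLocalMax f a :=
  ⟨fun h ↦ h.isLocalMax hs, fun h ↦ h.on s⟩

theorem isLocalMax_comp_iff_of_map_nhds_eq {X Y β : Type*} [TopologicalSpace X]
    [TopologicalSpace Y] [Preorder β] {g : X → Y} {f : Y → β} {x : X}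
    (hg : map g (𝓝 x) = 𝓝 (g x)) : IsLocalMax (f ∘ g) x ↔ IsLocalMax f (g x) := by
  rw [IsLocalMax, IsLocalMax, IsMaxFilter, IsMaxFilter, ← hg, eventually_map]
  rfl

theorem map_nhds_eq_of_surjective_fderiv {𝕜 E F : Type*} [RCLike 𝕜]
    [NormedAddCommGroup E] [NormedSpace 𝕜 E] [CompleteSpace E]
    [NormedAddCommGroup F] [NormedSpace 𝕜 F] [CompleteSpace F] {g : E → F} {x : E}
    (hd : ∀ᶠ y in 𝓝 x, DifferentiableAt 𝕜 g y) (hc : ContinuousAt (fderiv 𝕜 g) x)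
    (hsurj : Function.Surjective (fderiv 𝕜 g x)) : map g (𝓝 x) = 𝓝 (g x) :=
  (hasStrictFDerivAt_of_hasFDerivAt_of_continuousAt (hd.mono fun _ h ↦ h.hasFDerivAt) hc)
    |>.map_nhds_eq_of_surj (LinearMap.range_eq_top.2 hsurj)

theorem local_max_iff_local_max_general
    (i j : ℕ)
    (Θ : Set (EuclideanSpace ℝ (Fin i))) (Θt : Set (EuclideanSpace ℝ (Fin j)))
    (hΘ : IsOpen Θ) (hΘt : IsOpen Θt)
    (g : EuclideanSpace ℝ (Fin j) → EuclideanSpace ℝ (Fin i))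
    (hg1 : ∀ x ∈ Θt, DifferentiableAt ℝ g x)
    (hg2 : ∀ x ∈ Θt, DifferentiableAt ℝ (fderiv ℝ g) x)
    (hsub : ∀ x ∈ Θt, Function.Surjective (fderiv ℝ g x))
    (himg : g '' Θt = Θ)
    (f : EuclideanSpace ℝ (Fin i) → ℝ)
    (θt : EuclideanSpace ℝ (Fin j)) (hθt : θt ∈ Θt) :
    IsLocalMaxOn (f ∘ g) Θt θt ↔ IsLocalMaxOn f Θ (g θt) := by
  have hΘt_nhds : Θt ∈ 𝓝 θt := hΘt.mem_nhds hθt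
  have hΘ_nhds : Θ ∈ 𝓝 (g θt) := hΘ.mem_nhds (himg ▸ mem_image_of_mem g hθt)
  have hmap : map g (𝓝 θt) = 𝓝 (g θt) :=
    map_nhds_eq_of_surjective_fderiv (eventually_of_mem hΘt_nhds hg1)
      (hg2 θt hθt).continuousAt (hsub θt hθt)
  rw [isLocalMaxOn_iff_isLocalMax_of_mem_nhds hΘt_nhds,
    isLocalMaxOn_iff_isLocalMax_of_mem_nhds hΘ_nhds]
  exact isLocalMax_comp_iff_of_map_nhds_eq hmap

/-- Proposition 3 (local maximum correspondence): `f̃ = f ∘ g` has a local maximum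
at `θ̃ ∈ Θ̃` iff `f` has a local maximum at `θ = g θ̃`. -/
theorem local_max_iff_local_max
    (i j : ℕ) (hij : i ≤ j)
    (Θ : Set (EuclideanSpace ℝ (Fin i))) (Θt : Set (EuclideanSpace ℝ (Fin j)))
    (hΘ : IsOpen Θ) (hΘt : IsOpen Θt)
    (g : EuclideanSpace ℝ (Fin j) → EuclideanSpace ℝ (Fin i))
    (hg1 : ∀ x ∈ Θt, DifferentiableAt ℝ g x)
    (hg2 : ∀ x ∈ Θt, DifferentiableAt ℝ (fderiv ℝ g) x)
    (hsub : ∀ x ∈ Θt, Function.Surjective (fderiv ℝ g x))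
    (himg : g '' Θt = Θ)
    (f : EuclideanSpace ℝ (Fin i) → ℝ)
    (hf : ContDiffOn ℝ 2 f Θ)
    (θt : EuclideanSpace ℝ (Fin j)) (hθt : θt ∈ Θt) :
    IsLocalMaxOn (f ∘ g) Θt θt ↔ IsLocalMaxOn f Θ (g θt) :=
  local_max_iff_local_max_general i j Θ Θt hΘ hΘt g hg1 hg2 hsub himg f θt hθt
end

section
/- Let Θ ⊆ ℝ^i and Θ̃ ⊆ ℝ^j be open sets, let g : Θ̃ → Θ be twice differentiable with surjective Jacobian at every point, let f : Θ → ℝ be twice continuously differentiable, and set f̃ = f ∘ g. Suppose θ̃ ∈ Θ̃ is such that ∇f(g(θ̃)) = 0 and there exists v ∈ ℝ^i with vᵀ ∇²f(g(θ̃)) v < 0. Then there exists ṽ ∈ ℝ^j with ṽᵀ ∇²f̃(θ̃) ṽ < 0; specifically, ṽ = Aᵀv works for any left inverse A of the transposed Jacobian ∇g(θ̃). -/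
/-!
At a critical point of `f`, the second-order chain rule loses the term carrying the second
derivative of `g`, so the Hessian of `f ∘ g` is the Hessian of `f` pulled back along `Dg`.
A right inverse `B` of the surjective `Dg` therefore sends `v` to a direction `B v` along
which `f ∘ g` has the same curvature as `f` along `v`.
-/

open Set Topology Filter

section SecondOrderChainRule

variable {𝕜 : Type*} [NontriviallyNormedField 𝕜]
  {E F G : Type*} [NormedAddCommGroup E] [NormedSpace 𝕜 E] [NormedAddCommGroup F] [NormedSpace 𝕜 F]
  [NormedAddCommGroup G] [NormedSpace 𝕜 G] {f : F → G} {g : E → F} {x : E}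

theorem fderiv_fderiv_comp_apply
    (hf : ∀ᶠ y in 𝓝 x, DifferentiableAt 𝕜 f (g y)) (hg : ∀ᶠ y in 𝓝 x, DifferentiableAt 𝕜 g y)
    (hf' : DifferentiableAt 𝕜 (fderiv 𝕜 f) (g x)) (hg' : DifferentiableAt 𝕜 (fderiv 𝕜 g) x)
    (w₁ w₂ : E) :
    fderiv 𝕜 (fderiv 𝕜 (f ∘ g)) x w₁ w₂ =
      fderiv 𝕜 f (g x) (fderiv 𝕜 (fderiv 𝕜 g) x w₁ w₂) +
        fderiv 𝕜 (fderiv 𝕜 f) (g x) (fderiv 𝕜 g x w₁) (fderiv 𝕜 g x w₂) := by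
  have hchain : fderiv 𝕜 (f ∘ g) =ᶠ[𝓝 x] fun y ↦ (fderiv 𝕜 f (g y)).comp (fderiv 𝕜 g y) := by
    filter_upwards [hf, hg] with y hfy hgy using fderiv_comp y hfy hgy
  have hD : HasFDerivAt (fun y ↦ (fderiv 𝕜 f (g y)).comp (fderiv 𝕜 g y)) _ x :=
    (hf'.hasFDerivAt.comp x hg.self_of_nhds.hasFDerivAt).clm_comp hg'.hasFDerivAt
  rw [hchain.fderiv_eq, hD.fderiv]
  simp

theorem iteratedFDeriv_two_comp_apply_of_fderiv_eq_zero
    (hf : ∀ᶠ y in 𝓝 x, DifferentiableAt 𝕜 f (g y)) (hg : ∀ᶠ y in 𝓝 x, DifferentiableAt 𝕜 g y)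
    (hf' : DifferentiableAt 𝕜 (fderiv 𝕜 f) (g x)) (hg' : DifferentiableAt 𝕜 (fderiv 𝕜 g) x)
    (hcrit : fderiv 𝕜 f (g x) = 0) (w₁ w₂ : E) :
    iteratedFDeriv 𝕜 2 (f ∘ g) x ![w₁, w₂] =
      iteratedFDeriv 𝕜 2 f (g x) ![fderiv 𝕜 g x w₁, fderiv 𝕜 g x w₂] := by
  simp only [iteratedFDeriv_two_apply, Matrix.cons_val_zero, Matrix.cons_val_one,
    fderiv_fderiv_comp_apply hf hg hf' hg', hcrit, zero_apply, zero_add]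

end SecondOrderChainRule

/-- Negative-curvature direction transfer: if `∇f(g θ̃) = 0` and `f` has a
direction `v` of strictly negative curvature at `g θ̃`, then `f̃ = f ∘ g` has a
direction `ṽ` of strictly negative curvature at `θ̃`; specifically, `ṽ = Aᵀv`
works for any left inverse `A` of the transposed Jacobian `∇g(θ̃)`, equivalently
`ṽ = B v` works for any right inverse `B = Aᵀ` of the Jacobian `Dg(θ̃)`. -/
theorem negative_curvature_direction_of_comp
    (i j : ℕ)
    (Θ : Set (EuclideanSpace ℝ (Fin i))) (Θt : Set (EuclideanSpace ℝ (Fin j)))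
    (hΘ : IsOpen Θ) (hΘt : IsOpen Θt)
    (g : EuclideanSpace ℝ (Fin j) → EuclideanSpace ℝ (Fin i))
    (hmaps : MapsTo g Θt Θ)
    (hg1 : ∀ x ∈ Θt, DifferentiableAt ℝ g x)
    (hg2 : ∀ x ∈ Θt, DifferentiableAt ℝ (fderiv ℝ g) x)
    (hsub : ∀ x ∈ Θt, Function.Surjective (fderiv ℝ g x))
    (f : EuclideanSpace ℝ (Fin i) → ℝ)
    (hf : ContDiffOn ℝ 2 f Θ)
    (θt : EuclideanSpace ℝ (Fin j)) (hθt : θt ∈ Θt)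
    (hcrit : fderiv ℝ f (g θt) = 0)
    (v : EuclideanSpace ℝ (Fin i))
    (hv : iteratedFDeriv ℝ 2 f (g θt) ![v, v] < 0) :
    (∃ vt : EuclideanSpace ℝ (Fin j), iteratedFDeriv ℝ 2 (f ∘ g) θt ![vt, vt] < 0) ∧
    ∀ B : EuclideanSpace ℝ (Fin i) →L[ℝ] EuclideanSpace ℝ (Fin j),
      (fderiv ℝ g θt).comp B = ContinuousLinearMap.id ℝ (EuclideanSpace ℝ (Fin i)) →
      iteratedFDeriv ℝ 2 (f ∘ g) θt ![B v, B v] < 0 := by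
  have hx : g θt ∈ Θ := hmaps hθt
  have hf' : DifferentiableAt ℝ (fderiv ℝ f) (g θt) :=
    ((hf.contDiffAt (hΘ.mem_nhds hx)).fderiv_right (m := 1) le_rfl).differentiableAt one_ne_zero
  have hcomp := iteratedFDeriv_two_comp_apply_of_fderiv_eq_zero
    (eventually_of_mem (hΘt.mem_nhds hθt) fun y hy ↦
      (hf.differentiableOn two_ne_zero).differentiableAt (hΘ.mem_nhds (hmaps hy)))
    (eventually_of_mem (hΘt.mem_nhds hθt) hg1) hf' (hg2 θt hθt) hcrit
  have hright : ∀ B : EuclideanSpace ℝ (Fin i) →L[ℝ] EuclideanSpace ℝ (Fin j),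
      (fderiv ℝ g θt).comp B = ContinuousLinearMap.id ℝ (EuclideanSpace ℝ (Fin i)) →
      iteratedFDeriv ℝ 2 (f ∘ g) θt ![B v, B v] < 0 := by
    intro B hB
    rwa [hcomp, ← ContinuousLinearMap.comp_apply, hB, ContinuousLinearMap.id_apply]
  obtain ⟨B, hB⟩ := (fderiv ℝ g θt).exists_rightInverse_of_surjective
    (LinearMap.range_eq_top.mpr (hsub θt hθt))
  exact ⟨⟨B v, hright B hB⟩, hright⟩
end
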